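/- arXiv:1207.1118 — 5 statements merged into one kernel-verified Lean document; each statement's English description precedes it below -/
import Mathlib

section
/- Let E and F be Banach spaces and for i = 1,2 let T_i : [0,∞) → L(E), R_i : [0,∞) → L(F,E), S_i : [0,∞) → L(F) be families of bounded operators such that each family 𝒯_i(t) := M(T_i(t), R_i(t), S_i(t)) is a semigroup on E × F. Assume there exist constants M' ≥ 1, K > 0 and ω' ∈ ℝ such that for i = 1,2, all t ≥ 0 and all integers n ≥ 1: (0) ‖T_i(t)‖ ≤ M'·e^{ω't} and ‖S_i(t)‖ ≤ M'·e^{ω't}; (i) ‖(T₂(t/n)T₁(t/n))^n‖ ≤ M'·e^{ω't} and ‖(S₂(t/n)S₁(t/n))^n‖ ≤ M'·e^{ω't}; (ii) ‖R_i(t)‖ ≤ K·t·e^{ω't}. Then there exist M ≥ 1 and ω ∈ ℝ such that ‖(𝒯₂(t/n)𝒯₁(t/n))^n‖ ≤ M·e^{ωt} for all t ≥ 0 and all integers n ≥ 1. -/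
open ContinuousLinearMap

/-- The upper triangular operator matrix `M(T,R,S)(x,y) = (T x + R y, S y)` on `E × F`. -/
noncomputable def upperTri {E F : Type*} [NormedAddCommGroup E] [NormedSpace ℝ E]
    [NormedAddCommGroup F] [NormedSpace ℝ F]
    (T : E →L[ℝ] E) (R : F →L[ℝ] E) (S : F →L[ℝ] F) : (E × F) →L[ℝ] (E × F) :=
  (T.comp (fst ℝ E F) + R.comp (snd ℝ E F)).prod (S.comp (snd ℝ E F))

/-- A one-parameter semigroup on a Banach space: `U 0 = Id` and
`U (t + s) = U t ∘ U s` for all `s, t ≥ 0`. -/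
def IsOPSemigroup {X : Type*} [NormedAddCommGroup X] [NormedSpace ℝ X]
    (U : ℝ → X →L[ℝ] X) : Prop :=
  U 0 = 1 ∧ ∀ s t : ℝ, 0 ≤ s → 0 ≤ t → U (t + s) = U t * U s

section Aux

variable {E F : Type*} [NormedAddCommGroup E] [NormedSpace ℝ E]
    [NormedAddCommGroup F] [NormedSpace ℝ F]

lemma upperTri_apply (T : E →L[ℝ] E) (R : F →L[ℝ] E) (S : F →L[ℝ] F) (p : E × F) :
    upperTri T R S p = (T p.1 + R p.2, S p.2) := rfl

lemma upperTri_mul (T T' : E →L[ℝ] E) (R R' : F →L[ℝ] E) (S S' : F →L[ℝ] F) :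
    upperTri T R S * upperTri T' R' S' =
      upperTri (T * T') (T.comp R' + R.comp S') (S * S') := by
  ext p <;> simp [upperTri, mul_apply, add_apply, comp_apply]

lemma upperTri_pow (T : E →L[ℝ] E) (R : F →L[ℝ] E) (S : F →L[ℝ] F) (n : ℕ) :
    (upperTri T R S) ^ n =
      upperTri (T ^ n) (∑ j ∈ Finset.range n, (T ^ j).comp (R.comp (S ^ (n - 1 - j)))) (S ^ n) := by
  induction n with
  | zero =>
    simp only [pow_zero, Finset.range_zero, Finset.sum_empty]
    ext p <;> simp [upperTri, one_apply]
  | succ n ih =>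
    rw [pow_succ', ih, upperTri_mul]
    congr 1
    · exact (pow_succ' T n).symm
    · rw [Finset.sum_range_succ' (fun j => (T ^ j).comp (R.comp (S ^ (n + 1 - 1 - j))))]
      simp only [Nat.add_sub_cancel, pow_zero, one_def]
      simp only [Nat.sub_zero, id_comp]
      have hc : T.comp (∑ j ∈ Finset.range n, (T ^ j).comp (R.comp (S ^ (n - 1 - j)))) =
          ∑ j ∈ Finset.range n, T.comp ((T ^ j).comp (R.comp (S ^ (n - 1 - j)))) :=
        map_sum ((ContinuousLinearMap.compL ℝ F E E) T) _ _
      rw [hc]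
      congr 1
      refine Finset.sum_congr rfl fun j hj => ?_
      have hj' : j < n := Finset.mem_range.mp hj
      have : n - 1 - j = n - (j + 1) := by omega
      rw [this, ← comp_assoc, ← mul_def, ← pow_succ']
    · exact (pow_succ' S n).symm

lemma upperTri_norm_le (T : E →L[ℝ] E) (R : F →L[ℝ] E) (S : F →L[ℝ] F) :
    ‖upperTri T R S‖ ≤ ‖T‖ + ‖R‖ + ‖S‖ := by
  refine opNorm_le_bound _ (by positivity) fun p => ?_
  rw [upperTri_apply]
  have h1 : ‖p.1‖ ≤ ‖p‖ := norm_fst_le p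
  have h2 : ‖p.2‖ ≤ ‖p‖ := norm_snd_le p
  rw [Prod.norm_def]
  refine max_le ?_ ?_
  · calc ‖T p.1 + R p.2‖ ≤ ‖T‖ * ‖p.1‖ + ‖R‖ * ‖p.2‖ :=
        (norm_add_le _ _).trans (add_le_add (le_opNorm _ _) (le_opNorm _ _))
    _ ≤ (‖T‖ + ‖R‖ + ‖S‖) * ‖p‖ := by nlinarith [norm_nonneg T, norm_nonneg R, norm_nonneg S, norm_nonneg p]
  · calc ‖S p.2‖ ≤ ‖S‖ * ‖p.2‖ := le_opNorm _ _
    _ ≤ (‖T‖ + ‖R‖ + ‖S‖) * ‖p‖ := by nlinarith [norm_nonneg T, norm_nonneg R, norm_nonneg S, norm_nonneg p]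

end Aux

/-- stability of the sequential (Trotter) products of two upper triangular
operator matrix semigroups. -/
theorem stability_trotter_upperTri {E F : Type*}
    [NormedAddCommGroup E] [NormedSpace ℝ E] [CompleteSpace E]
    [NormedAddCommGroup F] [NormedSpace ℝ F] [CompleteSpace F]
    (T₁ T₂ : ℝ → E →L[ℝ] E) (R₁ R₂ : ℝ → F →L[ℝ] E) (S₁ S₂ : ℝ → F →L[ℝ] F)
    (hsg₁ : IsOPSemigroup (fun t => upperTri (T₁ t) (R₁ t) (S₁ t)))
    (hsg₂ : IsOPSemigroup (fun t => upperTri (T₂ t) (R₂ t) (S₂ t)))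
    (M' K ω' : ℝ) (hM' : 1 ≤ M') (hK : 0 < K)
    (hT₁ : ∀ t : ℝ, 0 ≤ t → ‖T₁ t‖ ≤ M' * Real.exp (ω' * t))
    (hT₂ : ∀ t : ℝ, 0 ≤ t → ‖T₂ t‖ ≤ M' * Real.exp (ω' * t))
    (hS₁ : ∀ t : ℝ, 0 ≤ t → ‖S₁ t‖ ≤ M' * Real.exp (ω' * t))
    (hS₂ : ∀ t : ℝ, 0 ≤ t → ‖S₂ t‖ ≤ M' * Real.exp (ω' * t))
    (hTprod : ∀ t : ℝ, 0 ≤ t → ∀ n : ℕ, 1 ≤ n →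
      ‖(T₂ (t / n) * T₁ (t / n)) ^ n‖ ≤ M' * Real.exp (ω' * t))
    (hSprod : ∀ t : ℝ, 0 ≤ t → ∀ n : ℕ, 1 ≤ n →
      ‖(S₂ (t / n) * S₁ (t / n)) ^ n‖ ≤ M' * Real.exp (ω' * t))
    (hR₁ : ∀ t : ℝ, 0 ≤ t → ‖R₁ t‖ ≤ K * t * Real.exp (ω' * t))
    (hR₂ : ∀ t : ℝ, 0 ≤ t → ‖R₂ t‖ ≤ K * t * Real.exp (ω' * t)) :
    ∃ M ω : ℝ, 1 ≤ M ∧ ∀ t : ℝ, 0 ≤ t → ∀ n : ℕ, 1 ≤ n →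
      ‖(upperTri (T₂ (t / n)) (R₂ (t / n)) (S₂ (t / n)) *
          upperTri (T₁ (t / n)) (R₁ (t / n)) (S₁ (t / n))) ^ n‖ ≤ M * Real.exp (ω * t) := by
  have hM'3 : (0:ℝ) < M' ^ 3 * K := mul_pos (pow_pos (by linarith) 3) hK
  refine ⟨2 * M' + 2 * M' ^ 3 * K, 4 * |ω'| + 1, by nlinarith, fun t ht n hn => ?_⟩
  have hn0 : (n : ℝ) ≠ 0 := Nat.cast_ne_zero.mpr (by omega)
  have hnpos : (0 : ℝ) < n := by positivity
  set τ := t / n with hτ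
  have hτ0 : 0 ≤ τ := div_nonneg ht hnpos.le
  have hτt : τ ≤ t := by
    rw [hτ, div_le_iff₀ hnpos]
    nlinarith [show (1:ℝ) ≤ (n:ℝ) from Nat.one_le_cast.mpr hn]
  have hnτ : (n : ℝ) * τ = t := by rw [hτ]; field_simp
  set e1 := Real.exp (|ω'| * t) with he1def
  have he1 : 1 ≤ e1 := Real.one_le_exp (by positivity)
  have he1pos : 0 < e1 := Real.exp_pos _
  -- exp (ω' * s) ≤ e1 for 0 ≤ s ≤ t
  have hexp : ∀ s : ℝ, 0 ≤ s → s ≤ t → Real.exp (ω' * s) ≤ e1 := by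
    intro s hs hst
    apply Real.exp_le_exp.mpr
    calc ω' * s ≤ |ω'| * s := mul_le_mul_of_nonneg_right (le_abs_self _) hs
      _ ≤ |ω'| * t := mul_le_mul_of_nonneg_left hst (abs_nonneg _)
  set A := T₂ τ * T₁ τ with hA
  set B := S₂ τ * S₁ τ with hB
  set C := (T₂ τ).comp (R₁ τ) + (R₂ τ).comp (S₁ τ) with hC
  -- powers of A and B up to n are bounded by M' * e1
  have hApow : ∀ j : ℕ, j ≤ n → ‖A ^ j‖ ≤ M' * e1 := by
    intro j hj
    rcases Nat.eq_zero_or_pos j with rfl | hjpos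
    · rw [pow_zero, ContinuousLinearMap.one_def]
      exact le_trans norm_id_le (one_le_mul_of_one_le_of_one_le hM' he1)
    · have hjR : (j : ℝ) ≠ 0 := Nat.cast_ne_zero.mpr (by omega)
      have hs : (0:ℝ) ≤ (j : ℝ) * τ := by positivity
      have hst : (j : ℝ) * τ ≤ t := by
        rw [← hnτ]
        exact mul_le_mul_of_nonneg_right (Nat.cast_le.mpr hj) hτ0
      have := hTprod ((j : ℝ) * τ) hs j hjpos
      rw [mul_div_cancel_left₀ τ hjR] at this
      calc ‖A ^ j‖ ≤ M' * Real.exp (ω' * ((j:ℝ) * τ)) := this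
        _ ≤ M' * e1 := mul_le_mul_of_nonneg_left (hexp _ hs hst) (by linarith)
  have hBpow : ∀ j : ℕ, j ≤ n → ‖B ^ j‖ ≤ M' * e1 := by
    intro j hj
    rcases Nat.eq_zero_or_pos j with rfl | hjpos
    · rw [pow_zero, ContinuousLinearMap.one_def]
      exact le_trans norm_id_le (one_le_mul_of_one_le_of_one_le hM' he1)
    · have hjR : (j : ℝ) ≠ 0 := Nat.cast_ne_zero.mpr (by omega)
      have hs : (0:ℝ) ≤ (j : ℝ) * τ := by positivity
      have hst : (j : ℝ) * τ ≤ t := by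
        rw [← hnτ]
        exact mul_le_mul_of_nonneg_right (Nat.cast_le.mpr hj) hτ0
      have := hSprod ((j : ℝ) * τ) hs j hjpos
      rw [mul_div_cancel_left₀ τ hjR] at this
      calc ‖B ^ j‖ ≤ M' * Real.exp (ω' * ((j:ℝ) * τ)) := this
        _ ≤ M' * e1 := mul_le_mul_of_nonneg_left (hexp _ hs hst) (by linarith)
  -- bound on the off-diagonal generator C
  have heτ : Real.exp (ω' * τ) ≤ e1 := hexp τ hτ0 hτt
  have heτ0 : 0 ≤ Real.exp (ω' * τ) := (Real.exp_pos _).le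
  have hCnorm : ‖C‖ ≤ 2 * M' * K * τ * e1 ^ 2 := by
    have h1 : ‖(T₂ τ).comp (R₁ τ)‖ ≤ M' * K * τ * e1 ^ 2 := by
      calc ‖(T₂ τ).comp (R₁ τ)‖ ≤ ‖T₂ τ‖ * ‖R₁ τ‖ := opNorm_comp_le _ _
        _ ≤ (M' * Real.exp (ω' * τ)) * (K * τ * Real.exp (ω' * τ)) := by
            apply mul_le_mul (hT₂ τ hτ0) (hR₁ τ hτ0) (norm_nonneg _)
            positivity
        _ ≤ (M' * e1) * (K * τ * e1) := by
            apply mul_le_mul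
            · exact mul_le_mul_of_nonneg_left heτ (by linarith)
            · exact mul_le_mul_of_nonneg_left heτ (by positivity)
            · positivity
            · positivity
        _ = M' * K * τ * e1 ^ 2 := by ring
    have h2 : ‖(R₂ τ).comp (S₁ τ)‖ ≤ M' * K * τ * e1 ^ 2 := by
      calc ‖(R₂ τ).comp (S₁ τ)‖ ≤ ‖R₂ τ‖ * ‖S₁ τ‖ := opNorm_comp_le _ _
        _ ≤ (K * τ * Real.exp (ω' * τ)) * (M' * Real.exp (ω' * τ)) := by
            apply mul_le_mul (hR₂ τ hτ0) (hS₁ τ hτ0) (norm_nonneg _)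
            positivity
        _ ≤ (K * τ * e1) * (M' * e1) := by
            apply mul_le_mul
            · exact mul_le_mul_of_nonneg_left heτ (by positivity)
            · exact mul_le_mul_of_nonneg_left heτ (by linarith)
            · positivity
            · positivity
        _ = M' * K * τ * e1 ^ 2 := by ring
    calc ‖C‖ ≤ ‖(T₂ τ).comp (R₁ τ)‖ + ‖(R₂ τ).comp (S₁ τ)‖ := norm_add_le _ _
      _ ≤ 2 * M' * K * τ * e1 ^ 2 := by linarith
  -- rewrite the power as an upper triangular matrix
  rw [upperTri_mul, upperTri_pow]
  set off := ∑ j ∈ Finset.range n,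
      (A ^ j).comp (C.comp (B ^ (n - 1 - j))) with hoffdef
  have hoff : ‖off‖ ≤ 2 * M' ^ 3 * K * t * e1 ^ 4 := by
    have hterm : ∀ j ∈ Finset.range n,
        ‖(A ^ j).comp (C.comp (B ^ (n - 1 - j)))‖ ≤
          (M' * e1) * (2 * M' * K * τ * e1 ^ 2) * (M' * e1) := by
      intro j hj
      have hj' : j < n := Finset.mem_range.mp hj
      calc ‖(A ^ j).comp (C.comp (B ^ (n - 1 - j)))‖
          ≤ ‖A ^ j‖ * ‖C.comp (B ^ (n - 1 - j))‖ := opNorm_comp_le _ _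
        _ ≤ ‖A ^ j‖ * (‖C‖ * ‖B ^ (n - 1 - j)‖) :=
            mul_le_mul_of_nonneg_left (opNorm_comp_le _ _) (norm_nonneg _)
        _ ≤ (M' * e1) * ((2 * M' * K * τ * e1 ^ 2) * (M' * e1)) := by
            apply mul_le_mul (hApow j hj'.le) _ (by positivity) (by positivity)
            apply mul_le_mul hCnorm (hBpow _ (by omega)) (norm_nonneg _) (by positivity)
        _ = (M' * e1) * (2 * M' * K * τ * e1 ^ 2) * (M' * e1) := by ring
    calc ‖off‖ ≤ ∑ j ∈ Finset.range n,
          ‖(A ^ j).comp (C.comp (B ^ (n - 1 - j)))‖ := norm_sum_le _ _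
      _ ≤ (n : ℝ) * ((M' * e1) * (2 * M' * K * τ * e1 ^ 2) * (M' * e1)) := by
          have := Finset.sum_le_card_nsmul (Finset.range n) _ _ hterm
          simpa [nsmul_eq_mul] using this
      _ = 2 * M' ^ 3 * K * ((n:ℝ) * τ) * e1 ^ 4 := by ring
      _ = 2 * M' ^ 3 * K * t * e1 ^ 4 := by rw [hnτ]
  -- final estimate
  have hmat : ‖upperTri (A ^ n) off (B ^ n)‖ ≤ ‖A ^ n‖ + ‖off‖ + ‖B ^ n‖ :=
    upperTri_norm_le _ _ _
  have hX : e1 ≤ Real.exp ((4 * |ω'| + 1) * t) := by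
    apply Real.exp_le_exp.mpr
    nlinarith [abs_nonneg ω']
  have hX2 : t * e1 ^ 4 ≤ Real.exp ((4 * |ω'| + 1) * t) := by
    have h4 : e1 ^ 4 = Real.exp (4 * (|ω'| * t)) := by
      rw [he1def, ← Real.exp_nat_mul]; norm_num
    have ht' : t ≤ Real.exp t := t.le_exp_log.trans (Real.exp_le_exp.mpr (Real.log_le_self ht))
    calc t * e1 ^ 4 ≤ Real.exp t * Real.exp (4 * (|ω'| * t)) := by
          rw [h4]
          exact mul_le_mul_of_nonneg_right (by
            linarith [Real.add_one_le_exp t]) (Real.exp_pos _).le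
      _ = Real.exp ((4 * |ω'| + 1) * t) := by rw [← Real.exp_add]; ring_nf
  calc ‖upperTri (A ^ n) off (B ^ n)‖ ≤ ‖A ^ n‖ + ‖off‖ + ‖B ^ n‖ := hmat
    _ ≤ (M' * e1) + 2 * M' ^ 3 * K * t * e1 ^ 4 + (M' * e1) :=
        add_le_add (add_le_add (hApow n le_rfl) hoff) (hBpow n le_rfl)
    _ = 2 * M' * e1 + 2 * M' ^ 3 * K * (t * e1 ^ 4) := by ring
    _ ≤ 2 * M' * Real.exp ((4 * |ω'| + 1) * t) +
        2 * M' ^ 3 * K * Real.exp ((4 * |ω'| + 1) * t) := by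
        apply add_le_add
        · exact mul_le_mul_of_nonneg_left hX (by linarith)
        · exact mul_le_mul_of_nonneg_left hX2 (by positivity)
    _ = (2 * M' + 2 * M' ^ 3 * K) * Real.exp ((4 * |ω'| + 1) * t) := by ring
end

section
/- Let 𝒳 be a Banach space, let (𝒯(t))_{t≥0} be a strongly continuous semigroup on 𝒳 satisfying ‖𝒯(t)‖ ≤ M'·e^{ω't} for all t ≥ 0 with some constants M' ≥ 1, ω' ∈ ℝ, let 𝒞 : 𝒳 → 𝒳 be a bounded linear operator, and set 𝒮(t) := exp(t·𝒞) (the operator exponential). Then there exist constants M ≥ 1 and ω ∈ ℝ such that ‖(𝒮(t/n)𝒯(t/n))^n‖ ≤ M·e^{ωt} for all t ≥ 0 and all integers n ≥ 1. -/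
set_option maxHeartbeats 1000000 in
/-- Norm bound for `exp A - 1` in a Banach algebra. -/
lemma aux_norm_exp_sub_one {𝔸 : Type*} [NormedRing 𝔸] [NormedAlgebra ℝ 𝔸]
    [CompleteSpace 𝔸] (A : 𝔸) :
    ‖NormedSpace.exp A - 1‖ ≤ Real.exp ‖A‖ - 1 := by
  have hs : Summable (fun n : ℕ => (Nat.factorial n : ℝ)⁻¹ • A ^ n) := NormedSpace.expSeries_summable' A
  have hg : Summable (fun n : ℕ => ‖A‖ ^ n / Nat.factorial n) := Real.summable_pow_div_factorial ‖A‖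
  have hexp : NormedSpace.exp A = ∑' n : ℕ, (Nat.factorial n : ℝ)⁻¹ • A ^ n := by
    rw [NormedSpace.exp_eq_tsum (𝕂 := ℝ)]
  have hz : (Nat.factorial 0 : ℝ)⁻¹ • A ^ 0 = 1 := by simp
  rw [hexp, Summable.tsum_eq_zero_add hs, hz, add_sub_cancel_left]
  have hR : Real.exp ‖A‖ - 1 = ∑' n : ℕ, ‖A‖ ^ (n + 1) / Nat.factorial (n + 1) := by
    have h1 : Real.exp ‖A‖ = ∑' n : ℕ, ‖A‖ ^ n / Nat.factorial n := by
      rw [Real.exp_eq_exp_ℝ, NormedSpace.exp_eq_tsum_div]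
    rw [h1, Summable.tsum_eq_zero_add hg]; simp
  rw [hR]
  have hbnd : ∀ n : ℕ, ‖((Nat.factorial (n+1) : ℕ) : ℝ)⁻¹ • A ^ (n+1)‖ ≤ ‖A‖ ^ (n+1) / Nat.factorial (n+1) := by
    intro n
    rw [norm_smul]
    have h1 : ‖((Nat.factorial (n+1) : ℕ) : ℝ)⁻¹‖ = ((Nat.factorial (n+1) : ℕ) : ℝ)⁻¹ := by
      rw [Real.norm_eq_abs, abs_of_nonneg]; positivity
    rw [h1, div_eq_inv_mul]
    gcongr
    exact norm_pow_le' A (Nat.succ_pos n)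
  have hsn : Summable (fun n : ℕ => ‖((Nat.factorial (n+1) : ℕ) : ℝ)⁻¹ • A ^ (n+1)‖) := by
    refine Summable.of_nonneg_of_le (fun n => norm_nonneg _) hbnd ?_
    exact (summable_nat_add_iff 1).mpr hg
  refine (norm_tsum_le_tsum_norm hsn).trans (Summable.tsum_le_tsum hbnd hsn ?_)
  exact (summable_nat_add_iff 1).mpr hg

/-- stability of the Trotter products of a strongly continuous semigroup
with the uniformly continuous semigroup generated by a bounded operator. -/
theorem stability_trotter_bounded_perturbation {𝒳 : Type*}
    [NormedAddCommGroup 𝒳] [NormedSpace ℝ 𝒳] [CompleteSpace 𝒳]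
    (𝒯 : ℝ → 𝒳 →L[ℝ] 𝒳)
    (h0 : 𝒯 0 = 1)
    (hadd : ∀ s t : ℝ, 0 ≤ s → 0 ≤ t → 𝒯 (t + s) = 𝒯 t * 𝒯 s)
    (hcont : ∀ x : 𝒳, ContinuousOn (fun t => 𝒯 t x) (Set.Ici (0 : ℝ)))
    (M' ω' : ℝ) (hM' : 1 ≤ M')
    (hbound : ∀ t : ℝ, 0 ≤ t → ‖𝒯 t‖ ≤ M' * Real.exp (ω' * t))
    (𝒞 : 𝒳 →L[ℝ] 𝒳) :
    ∃ M ω : ℝ, 1 ≤ M ∧ ∀ t : ℝ, 0 ≤ t → ∀ n : ℕ, 1 ≤ n →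
      ‖(NormedSpace.exp ((t / n) • 𝒞) * 𝒯 (t / n)) ^ n‖ ≤ M * Real.exp (ω * t) := by
  haveI hne : Nonempty {s : ℝ // 0 ≤ s} := ⟨⟨0, le_rfl⟩⟩
  -- the equivalent norm
  set N : 𝒳 → ℝ := fun x => ⨆ s : {s : ℝ // 0 ≤ s}, Real.exp (-ω' * s) * ‖𝒯 s x‖ with hN
  have hub : ∀ x : 𝒳, ∀ s : {s : ℝ // 0 ≤ s},
      Real.exp (-ω' * s) * ‖𝒯 s x‖ ≤ M' * ‖x‖ := by
    intro x s
    have h1 : ‖𝒯 (s : ℝ) x‖ ≤ M' * Real.exp (ω' * s) * ‖x‖ := by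
      calc ‖𝒯 (s : ℝ) x‖ ≤ ‖𝒯 (s : ℝ)‖ * ‖x‖ := (𝒯 (s : ℝ)).le_opNorm x
        _ ≤ M' * Real.exp (ω' * s) * ‖x‖ :=
          mul_le_mul_of_nonneg_right (hbound s s.2) (norm_nonneg x)
    have h2 : Real.exp (-ω' * s) * Real.exp (ω' * s) = 1 := by
      rw [← Real.exp_add]; ring_nf; exact Real.exp_zero
    calc Real.exp (-ω' * s) * ‖𝒯 (s : ℝ) x‖
        ≤ Real.exp (-ω' * s) * (M' * Real.exp (ω' * s) * ‖x‖) :=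
          mul_le_mul_of_nonneg_left h1 (Real.exp_pos _).le
      _ = (Real.exp (-ω' * s) * Real.exp (ω' * s)) * (M' * ‖x‖) := by ring
      _ = M' * ‖x‖ := by rw [h2, one_mul]
  have hbdd : ∀ x : 𝒳, BddAbove (Set.range fun s : {s : ℝ // 0 ≤ s} =>
      Real.exp (-ω' * s) * ‖𝒯 s x‖) := by
    intro x
    exact ⟨M' * ‖x‖, by rintro _ ⟨s, rfl⟩; exact hub x s⟩
  have hNle : ∀ x : 𝒳, N x ≤ M' * ‖x‖ := fun x => ciSup_le (hub x)
  have hleN : ∀ x : 𝒳, ‖x‖ ≤ N x := by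
    intro x
    have h := le_ciSup (hbdd x) ⟨0, le_rfl⟩
    refine le_trans (le_of_eq ?_) h
    simp [h0]
  have hN0 : ∀ x : 𝒳, 0 ≤ N x := fun x => (norm_nonneg x).trans (hleN x)
  have hNadd : ∀ x y : 𝒳, N (x + y) ≤ N x + N y := by
    intro x y
    refine ciSup_le fun s => ?_
    have hx := le_ciSup (hbdd x) s
    have hy := le_ciSup (hbdd y) s
    have h1 : ‖𝒯 (s : ℝ) (x + y)‖ ≤ ‖𝒯 (s : ℝ) x‖ + ‖𝒯 (s : ℝ) y‖ := by
      rw [map_add]; exact norm_add_le _ _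
    nlinarith [Real.exp_pos (-ω' * (s : ℝ))]
  -- quasi-contractivity of 𝒯 in the new norm
  have hNT : ∀ (τ : ℝ), 0 ≤ τ → ∀ x : 𝒳, N (𝒯 τ x) ≤ Real.exp (ω' * τ) * N x := by
    intro τ hτ x
    refine ciSup_le fun s => ?_
    have hcomp : 𝒯 (s : ℝ) (𝒯 τ x) = 𝒯 ((s : ℝ) + τ) x := by
      rw [hadd τ s hτ s.2]; rfl
    have harg : ω' * τ + -ω' * ((s : ℝ) + τ) = -ω' * s := by ring
    have hle := le_ciSup (hbdd x) ⟨(s : ℝ) + τ, add_nonneg s.2 hτ⟩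
    calc Real.exp (-ω' * s) * ‖𝒯 (s : ℝ) (𝒯 τ x)‖
        = Real.exp (ω' * τ) * (Real.exp (-ω' * ((s : ℝ) + τ)) * ‖𝒯 ((s : ℝ) + τ) x‖) := by
          rw [hcomp, ← mul_assoc, ← Real.exp_add, harg]
      _ ≤ Real.exp (ω' * τ) * N x :=
          mul_le_mul_of_nonneg_left hle (Real.exp_pos _).le
  -- growth of exp(τ𝒞) in the new norm
  have hNS : ∀ (τ : ℝ), 0 ≤ τ → ∀ x : 𝒳,
      N (NormedSpace.exp (τ • 𝒞) x) ≤ Real.exp (M' * (τ * ‖𝒞‖)) * N x := by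
    intro τ hτ x
    have hE : NormedSpace.exp (τ • 𝒞) = NormedSpace.exp (τ • 𝒞) := rfl
    set E := NormedSpace.exp (τ • 𝒞) with hEdef
    have hnorm : ‖τ • 𝒞‖ ≤ τ * ‖𝒞‖ := by
      calc ‖τ • 𝒞‖ ≤ ‖τ‖ * ‖𝒞‖ := norm_smul_le τ 𝒞
        _ = τ * ‖𝒞‖ := by rw [Real.norm_eq_abs, abs_of_nonneg hτ]
    have h1 : ‖E - 1‖ ≤ Real.exp (τ * ‖𝒞‖) - 1 := by
      have h := aux_norm_exp_sub_one (τ • 𝒞)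
      have h2 := Real.exp_le_exp.mpr hnorm
      rw [hEdef]
      linarith
    have h2 : N (E x - x) ≤ M' * (Real.exp (τ * ‖𝒞‖) - 1) * N x := by
      have ha : ‖E x - x‖ ≤ (Real.exp (τ * ‖𝒞‖) - 1) * ‖x‖ := by
        have : E x - x = (E - 1) x := by
          simp [ContinuousLinearMap.sub_apply]
        rw [this]
        calc ‖(E - 1) x‖ ≤ ‖E - 1‖ * ‖x‖ := (E - 1).le_opNorm x
          _ ≤ (Real.exp (τ * ‖𝒞‖) - 1) * ‖x‖ :=
            mul_le_mul_of_nonneg_right h1 (norm_nonneg x)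
      have hexp1 : (0:ℝ) ≤ Real.exp (τ * ‖𝒞‖) - 1 := by
        have : (1:ℝ) ≤ Real.exp (τ * ‖𝒞‖) := Real.one_le_exp (by positivity)
        linarith
      calc N (E x - x) ≤ M' * ‖E x - x‖ := hNle _
        _ ≤ M' * ((Real.exp (τ * ‖𝒞‖) - 1) * ‖x‖) := by
            apply mul_le_mul_of_nonneg_left ha (by linarith)
        _ ≤ M' * ((Real.exp (τ * ‖𝒞‖) - 1) * N x) := by
            apply mul_le_mul_of_nonneg_left _ (by linarith)
            exact mul_le_mul_of_nonneg_left (hleN x) hexp1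
        _ = M' * (Real.exp (τ * ‖𝒞‖) - 1) * N x := by ring
    have h3 : N (E x) ≤ (1 + M' * (Real.exp (τ * ‖𝒞‖) - 1)) * N x := by
      have : E x = x + (E x - x) := by abel
      calc N (E x) = N (x + (E x - x)) := by rw [← this]
        _ ≤ N x + N (E x - x) := hNadd _ _
        _ ≤ N x + M' * (Real.exp (τ * ‖𝒞‖) - 1) * N x := by linarith [h2]
        _ = (1 + M' * (Real.exp (τ * ‖𝒞‖) - 1)) * N x := by ring
    -- Bernoulli: 1 + M' * (e^a - 1) ≤ (e^a)^{M'} = e^{M' a}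
    have hBern : 1 + M' * (Real.exp (τ * ‖𝒞‖) - 1) ≤ Real.exp (M' * (τ * ‖𝒞‖)) := by
      have hs1 : (-1 : ℝ) ≤ Real.exp (τ * ‖𝒞‖) - 1 := by
        have := (Real.exp_pos (τ * ‖𝒞‖)).le; linarith
      have := one_add_mul_self_le_rpow_one_add hs1 hM'
      rw [add_sub_cancel] at this
      calc 1 + M' * (Real.exp (τ * ‖𝒞‖) - 1) ≤ Real.exp (τ * ‖𝒞‖) ^ M' := this
        _ = Real.exp (τ * ‖𝒞‖ * M') := (Real.exp_mul _ _).symm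
        _ = Real.exp (M' * (τ * ‖𝒞‖)) := by ring_nf
    calc N (E x) ≤ (1 + M' * (Real.exp (τ * ‖𝒞‖) - 1)) * N x := h3
      _ ≤ Real.exp (M' * (τ * ‖𝒞‖)) * N x :=
        mul_le_mul_of_nonneg_right hBern (hN0 x)
  -- conclusion
  refine ⟨M', ω' + M' * ‖𝒞‖, hM', ?_⟩
  intro t ht n hn
  set τ := t / n with hτdef
  have hτ : 0 ≤ τ := div_nonneg ht (Nat.cast_nonneg n)
  set c := ω' + M' * ‖𝒞‖ with hc
  set A := NormedSpace.exp (τ • 𝒞) * 𝒯 τ with hA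
  have hstep : ∀ y : 𝒳, N (A y) ≤ Real.exp (c * τ) * N y := by
    intro y
    have h1 : A y = NormedSpace.exp (τ • 𝒞) (𝒯 τ y) := rfl
    have harg : M' * (τ * ‖𝒞‖) + ω' * τ = c * τ := by rw [hc]; ring
    calc N (A y) = N (NormedSpace.exp (τ • 𝒞) (𝒯 τ y)) := by rw [h1]
      _ ≤ Real.exp (M' * (τ * ‖𝒞‖)) * N (𝒯 τ y) := hNS τ hτ _
      _ ≤ Real.exp (M' * (τ * ‖𝒞‖)) * (Real.exp (ω' * τ) * N y) :=
          mul_le_mul_of_nonneg_left (hNT τ hτ y) (Real.exp_pos _).le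
      _ = Real.exp (c * τ) * N y := by
          rw [← mul_assoc, ← Real.exp_add, harg]
  have hiter : ∀ m : ℕ, ∀ x : 𝒳, N ((A ^ m) x) ≤ Real.exp (c * τ) ^ m * N x := by
    intro m
    induction m with
    | zero => intro x; simp
    | succ k ih =>
        intro x
        have h1 : (A ^ (k + 1)) x = A ((A ^ k) x) := by
          rw [pow_succ']; rfl
        calc N ((A ^ (k + 1)) x) = N (A ((A ^ k) x)) := by rw [h1]
          _ ≤ Real.exp (c * τ) * N ((A ^ k) x) := hstep _
          _ ≤ Real.exp (c * τ) * (Real.exp (c * τ) ^ k * N x) :=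
              mul_le_mul_of_nonneg_left (ih x) (Real.exp_pos _).le
          _ = Real.exp (c * τ) ^ (k + 1) * N x := by ring
  have hnne : (n : ℝ) ≠ 0 := by
    exact Nat.cast_ne_zero.mpr (by omega)
  have hpow : Real.exp (c * τ) ^ n = Real.exp (c * t) := by
    rw [← Real.exp_nat_mul]
    congr 1
    rw [hτdef]
    field_simp
  refine ContinuousLinearMap.opNorm_le_bound _ (by positivity) fun x => ?_
  calc ‖(A ^ n) x‖ ≤ N ((A ^ n) x) := hleN _
    _ ≤ Real.exp (c * τ) ^ n * N x := hiter n x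
    _ = Real.exp (c * t) * N x := by rw [hpow]
    _ ≤ Real.exp (c * t) * (M' * ‖x‖) :=
        mul_le_mul_of_nonneg_left (hNle x) (Real.exp_pos _).le
    _ = M' * Real.exp (c * t) * ‖x‖ := by ring
end

section
/- Let 𝒳 be a Banach space, let (𝒯(t))_{t≥0} be a strongly continuous semigroup on 𝒳 satisfying ‖𝒯(t)‖ ≤ M'·e^{ω't} for all t ≥ 0 with some constants M' ≥ 1, ω' ∈ ℝ, let 𝒞 : 𝒳 → 𝒳 be a bounded linear operator, and set 𝒮(t) := exp(t·𝒞) (the operator exponential). Then there exist constants M ≥ 1 and ω ∈ ℝ such that ‖(1/2^n)·(𝒮(t/n)𝒯(t/n) + 𝒯(t/n)𝒮(t/n))^n‖ ≤ M·e^{ωt} for all t ≥ 0 and all integers n ≥ 1. -/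
set_option maxHeartbeats 1000000
set_option synthInstance.maxHeartbeats 400000

/-- stability of the symmetrically weighted products of a strongly continuous
semigroup with the uniformly continuous semigroup generated by a bounded operator. -/
theorem stability_weighted_bounded_perturbation {𝒳 : Type*}
    [NormedAddCommGroup 𝒳] [NormedSpace ℝ 𝒳] [CompleteSpace 𝒳]
    (𝒯 : ℝ → 𝒳 →L[ℝ] 𝒳)
    (h0 : 𝒯 0 = 1)
    (hadd : ∀ s t : ℝ, 0 ≤ s → 0 ≤ t → 𝒯 (t + s) = 𝒯 t * 𝒯 s)
    (hcont : ∀ x : 𝒳, ContinuousOn (fun t => 𝒯 t x) (Set.Ici (0 : ℝ)))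
    (M' ω' : ℝ) (hM' : 1 ≤ M')
    (hbound : ∀ t : ℝ, 0 ≤ t → ‖𝒯 t‖ ≤ M' * Real.exp (ω' * t))
    (𝒞 : 𝒳 →L[ℝ] 𝒳) :
    ∃ M ω : ℝ, 1 ≤ M ∧ ∀ t : ℝ, 0 ≤ t → ∀ n : ℕ, 1 ≤ n →
      ‖(1 / 2 ^ n : ℝ) •
        (NormedSpace.exp ((t / n) • 𝒞) * 𝒯 (t / n) +
          𝒯 (t / n) * NormedSpace.exp ((t / n) • 𝒞)) ^ n‖ ≤ M * Real.exp (ω * t) := by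
  have hM0 : (0:ℝ) ≤ M' := le_trans zero_le_one hM'
  set C : ℝ := M' * ‖𝒞‖ with hCdef
  have hC0 : 0 ≤ C := mul_nonneg hM0 (norm_nonneg _)
  -- the renorming
  set ν : 𝒳 → ℝ := fun x => ⨆ s : Set.Ici (0:ℝ), Real.exp (-(ω' * s)) * ‖𝒯 s x‖ with hν
  haveI : Nonempty (Set.Ici (0:ℝ)) := ⟨⟨0, Set.self_mem_Ici⟩⟩
  have hterm_le : ∀ x : 𝒳, ∀ s : ℝ, 0 ≤ s →
      Real.exp (-(ω' * s)) * ‖𝒯 s x‖ ≤ M' * ‖x‖ := by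
    intro x s hs
    have h1 : ‖𝒯 s x‖ ≤ (M' * Real.exp (ω' * s)) * ‖x‖ :=
      le_trans ((𝒯 s).le_opNorm x)
        (mul_le_mul_of_nonneg_right (hbound s hs) (norm_nonneg x))
    calc Real.exp (-(ω' * s)) * ‖𝒯 s x‖
        ≤ Real.exp (-(ω' * s)) * ((M' * Real.exp (ω' * s)) * ‖x‖) :=
          mul_le_mul_of_nonneg_left h1 (Real.exp_pos _).le
      _ = (Real.exp (-(ω' * s)) * Real.exp (ω' * s)) * (M' * ‖x‖) := by ring
      _ = M' * ‖x‖ := by rw [← Real.exp_add, neg_add_cancel, Real.exp_zero, one_mul]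
  have hbdd : ∀ x : 𝒳, BddAbove (Set.range fun s : Set.Ici (0:ℝ) =>
      Real.exp (-(ω' * s)) * ‖𝒯 s x‖) := by
    intro x
    refine ⟨M' * ‖x‖, ?_⟩
    rintro _ ⟨⟨s, hs⟩, rfl⟩
    exact hterm_le x s hs
  have hν_le : ∀ (x : 𝒳) (B : ℝ),
      (∀ s : ℝ, 0 ≤ s → Real.exp (-(ω' * s)) * ‖𝒯 s x‖ ≤ B) → ν x ≤ B := by
    intro x B hB
    exact ciSup_le fun ⟨s, hs⟩ => hB s hs
  have hle_ν : ∀ x : 𝒳, ‖x‖ ≤ ν x := by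
    intro x
    have h := le_ciSup (hbdd x) (⟨0, Set.self_mem_Ici⟩ : Set.Ici (0:ℝ))
    simpa [h0, Real.exp_zero] using h
  have hν_leM : ∀ x : 𝒳, ν x ≤ M' * ‖x‖ := fun x => hν_le x _ (hterm_le x)
  have hν_nonneg : ∀ x : 𝒳, 0 ≤ ν x := fun x => le_trans (norm_nonneg x) (hle_ν x)
  -- quasi-contractivity in the new norm
  have hν_T : ∀ h : ℝ, 0 ≤ h → ∀ x : 𝒳, ν (𝒯 h x) ≤ Real.exp (ω' * h) * ν x := by
    intro h hh x
    refine hν_le _ _ fun s hs => ?_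
    have heq : 𝒯 s (𝒯 h x) = 𝒯 (s + h) x := by
      rw [hadd h s hh hs]; rfl
    rw [heq]
    have key : Real.exp (-(ω' * s)) =
        Real.exp (ω' * h) * Real.exp (-(ω' * (s + h))) := by
      rw [← Real.exp_add]; ring_nf
    rw [key, mul_assoc]
    refine mul_le_mul_of_nonneg_left ?_ (Real.exp_pos _).le
    have := le_ciSup (hbdd x) (⟨s + h, add_nonneg hs hh⟩ : Set.Ici (0:ℝ))
    simpa using this
  -- subadditivity and homogeneity
  have hν_add : ∀ x y : 𝒳, ν (x + y) ≤ ν x + ν y := by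
    intro x y
    refine hν_le _ _ fun s hs => ?_
    have h1 : ‖𝒯 s (x + y)‖ ≤ ‖𝒯 s x‖ + ‖𝒯 s y‖ := by
      rw [map_add]; exact norm_add_le _ _
    calc Real.exp (-(ω' * s)) * ‖𝒯 s (x + y)‖
        ≤ Real.exp (-(ω' * s)) * (‖𝒯 s x‖ + ‖𝒯 s y‖) :=
          mul_le_mul_of_nonneg_left h1 (Real.exp_pos _).le
      _ = Real.exp (-(ω' * s)) * ‖𝒯 s x‖ + Real.exp (-(ω' * s)) * ‖𝒯 s y‖ := by ring
      _ ≤ ν x + ν y := by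
          gcongr
          · have := le_ciSup (hbdd x) (⟨s, hs⟩ : Set.Ici (0:ℝ)); simpa using this
          · have := le_ciSup (hbdd y) (⟨s, hs⟩ : Set.Ici (0:ℝ)); simpa using this
  have hν_smul : ∀ (a : ℝ), 0 ≤ a → ∀ x : 𝒳, ν (a • x) ≤ a * ν x := by
    intro a ha x
    refine hν_le _ _ fun s hs => ?_
    have : 𝒯 s (a • x) = a • 𝒯 s x := map_smul _ _ _
    rw [this, norm_smul, Real.norm_eq_abs, abs_of_nonneg ha]
    have h1 : Real.exp (-(ω' * s)) * ‖𝒯 s x‖ ≤ ν x := by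
      have := le_ciSup (hbdd x) (⟨s, hs⟩ : Set.Ici (0:ℝ)); simpa using this
    calc Real.exp (-(ω' * s)) * (a * ‖𝒯 s x‖)
        = a * (Real.exp (-(ω' * s)) * ‖𝒯 s x‖) := by ring
      _ ≤ a * ν x := mul_le_mul_of_nonneg_left h1 ha
  -- ν is Lipschitz, hence continuous
  have hν_lip : ∀ x y : 𝒳, ν x ≤ ν y + M' * ‖x - y‖ := by
    intro x y
    calc ν x = ν (y + (x - y)) := by rw [add_sub_cancel]
      _ ≤ ν y + ν (x - y) := hν_add _ _
      _ ≤ ν y + M' * ‖x - y‖ := by gcongr; exact hν_leM _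
  have hν_cont : Continuous ν := by
    refine (LipschitzWith.of_dist_le_mul (K := M'.toNNReal) (f := ν) ?_).continuous
    intro x y
    rw [Real.dist_eq, dist_eq_norm, Real.coe_toNNReal M' hM0]
    rw [abs_sub_le_iff]
    constructor
    · linarith [hν_lip x y]
    · have := hν_lip y x
      rw [norm_sub_rev] at this
      linarith
  -- action of 𝒞 and its powers
  have hν_C : ∀ x : 𝒳, ν (𝒞 x) ≤ C * ν x := by
    intro x
    calc ν (𝒞 x) ≤ M' * ‖𝒞 x‖ := hν_leM _
      _ ≤ M' * (‖𝒞‖ * ‖x‖) := by gcongr; exact 𝒞.le_opNorm x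
      _ = C * ‖x‖ := by ring
      _ ≤ C * ν x := mul_le_mul_of_nonneg_left (hle_ν x) hC0
  have hν_Ck : ∀ (k : ℕ) (x : 𝒳), ν ((𝒞 ^ k) x) ≤ C ^ k * ν x := by
    intro k
    induction k with
    | zero => intro x; simp
    | succ k ih =>
      intro x
      have heq : (𝒞 ^ (k + 1)) x = (𝒞 ^ k) (𝒞 x) := by
        rw [pow_succ]; rfl
      rw [heq]
      calc ν ((𝒞 ^ k) (𝒞 x)) ≤ C ^ k * ν (𝒞 x) := ih _
        _ ≤ C ^ k * (C * ν x) :=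
            mul_le_mul_of_nonneg_left (hν_C x) (pow_nonneg hC0 k)
        _ = C ^ (k + 1) * ν x := by ring
  -- the exponential bound
  have hν_exp : ∀ h : ℝ, 0 ≤ h → ∀ x : 𝒳,
      ν (NormedSpace.exp (h • 𝒞) x) ≤ Real.exp (C * h) * ν x := by
    intro h hh x
    have hsum : HasSum (fun k : ℕ => ((k.factorial : ℝ))⁻¹ • (h • 𝒞) ^ k)
        (NormedSpace.exp (h • 𝒞)) := by
      rw [NormedSpace.exp_eq_tsum ℝ]
      exact (NormedSpace.expSeries_summable' (h • 𝒞)).hasSum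
    have hsum2 : HasSum (fun k : ℕ => (((k.factorial : ℝ))⁻¹ • (h • 𝒞) ^ k) x)
        (NormedSpace.exp (h • 𝒞) x) := by
      have := (ContinuousLinearMap.apply ℝ 𝒳 x).hasSum hsum
      simpa only [ContinuousLinearMap.apply_apply] using this
    have hpartial : ∀ F : Finset ℕ,
        ν (∑ k ∈ F, (((k.factorial : ℝ))⁻¹ • (h • 𝒞) ^ k) x) ≤ Real.exp (C * h) * ν x := by
      intro F
      have hsum_le : ∀ F : Finset ℕ,
          ν (∑ k ∈ F, (((k.factorial : ℝ))⁻¹ • (h • 𝒞) ^ k) x) ≤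
            ∑ k ∈ F, (C * h) ^ k / (k.factorial : ℝ) * ν x := by
        intro F
        induction F using Finset.induction with
        | empty => simpa using hν_leM 0
        | @insert a F' hk ih =>
          rw [Finset.sum_insert hk, Finset.sum_insert hk]
          refine le_trans (hν_add _ _) ?_
          gcongr
          · -- single term
            have hterm : (((a.factorial : ℝ))⁻¹ • (h • 𝒞) ^ a) x =
                (((a.factorial : ℝ))⁻¹ * h ^ a) • ((𝒞 ^ a) x) := by
              rw [smul_pow, mul_smul]
              simp [ContinuousLinearMap.smul_apply]
            rw [hterm]
            have ha0 : (0:ℝ) ≤ ((a.factorial : ℝ))⁻¹ * h ^ a :=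
              mul_nonneg (inv_nonneg.mpr (Nat.cast_nonneg _)) (pow_nonneg hh a)
            calc ν ((((a.factorial : ℝ))⁻¹ * h ^ a) • ((𝒞 ^ a) x))
                ≤ (((a.factorial : ℝ))⁻¹ * h ^ a) * ν ((𝒞 ^ a) x) := hν_smul _ ha0 _
              _ ≤ (((a.factorial : ℝ))⁻¹ * h ^ a) * (C ^ a * ν x) :=
                  mul_le_mul_of_nonneg_left (hν_Ck a x) ha0
              _ = (C * h) ^ a / (a.factorial : ℝ) * ν x := by
                  rw [mul_pow]; ring
      refine le_trans (hsum_le F) ?_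
      rw [← Finset.sum_mul]
      refine mul_le_mul_of_nonneg_right ?_ (hν_nonneg x)
      -- partial sums of exp series bounded by exp
      have hsummable : Summable fun k : ℕ => (C * h) ^ k / (k.factorial : ℝ) :=
        Real.summable_pow_div_factorial (C * h)
      have hexp_eq : Real.exp (C * h) = ∑' k : ℕ, (C * h) ^ k / (k.factorial : ℝ) := by
        rw [Real.exp_eq_exp_ℝ, NormedSpace.exp_eq_tsum ℝ]
        refine tsum_congr fun k => ?_
        rw [smul_eq_mul, div_eq_inv_mul]
      rw [hexp_eq]
      exact Summable.sum_le_tsum F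
        (fun k _ => div_nonneg (pow_nonneg (mul_nonneg hC0 hh) k) (Nat.cast_nonneg _))
        hsummable
    exact le_of_tendsto ((hν_cont.tendsto _).comp hsum2)
      (Filter.Eventually.of_forall hpartial)
  -- the single-step bound for A h
  have hν_A : ∀ h : ℝ, 0 ≤ h → ∀ x : 𝒳,
      ν ((NormedSpace.exp (h • 𝒞) * 𝒯 h + 𝒯 h * NormedSpace.exp (h • 𝒞)) x) ≤
        2 * Real.exp ((ω' + C) * h) * ν x := by
    intro h hh x
    have happ : (NormedSpace.exp (h • 𝒞) * 𝒯 h + 𝒯 h * NormedSpace.exp (h • 𝒞)) x =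
        NormedSpace.exp (h • 𝒞) (𝒯 h x) + 𝒯 h (NormedSpace.exp (h • 𝒞) x) := rfl
    rw [happ]
    refine le_trans (hν_add _ _) ?_
    have h1 : ν (NormedSpace.exp (h • 𝒞) (𝒯 h x)) ≤ Real.exp ((ω' + C) * h) * ν x := by
      calc ν (NormedSpace.exp (h • 𝒞) (𝒯 h x)) ≤ Real.exp (C * h) * ν (𝒯 h x) :=
            hν_exp h hh _
        _ ≤ Real.exp (C * h) * (Real.exp (ω' * h) * ν x) :=
            mul_le_mul_of_nonneg_left (hν_T h hh x) (Real.exp_pos _).le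
        _ = Real.exp ((ω' + C) * h) * ν x := by rw [← mul_assoc, ← Real.exp_add]; ring_nf
    have h2 : ν (𝒯 h (NormedSpace.exp (h • 𝒞) x)) ≤ Real.exp ((ω' + C) * h) * ν x := by
      calc ν (𝒯 h (NormedSpace.exp (h • 𝒞) x)) ≤
            Real.exp (ω' * h) * ν (NormedSpace.exp (h • 𝒞) x) := hν_T h hh _
        _ ≤ Real.exp (ω' * h) * (Real.exp (C * h) * ν x) :=
            mul_le_mul_of_nonneg_left (hν_exp h hh x) (Real.exp_pos _).le
        _ = Real.exp ((ω' + C) * h) * ν x := by rw [← mul_assoc, ← Real.exp_add]; ring_nf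
    linarith
  -- iterated bound
  have hν_An : ∀ h : ℝ, 0 ≤ h → ∀ (n : ℕ) (x : 𝒳),
      ν (((NormedSpace.exp (h • 𝒞) * 𝒯 h + 𝒯 h * NormedSpace.exp (h • 𝒞)) ^ n) x) ≤
        (2 * Real.exp ((ω' + C) * h)) ^ n * ν x := by
    intro h hh n
    induction n with
    | zero => intro x; simp
    | succ n ih =>
      intro x
      set A := NormedSpace.exp (h • 𝒞) * 𝒯 h + 𝒯 h * NormedSpace.exp (h • 𝒞) with hA
      have heq : (A ^ (n + 1)) x = (A ^ n) (A x) := by rw [pow_succ]; rfl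
      rw [heq]
      calc ν ((A ^ n) (A x)) ≤ (2 * Real.exp ((ω' + C) * h)) ^ n * ν (A x) := ih _
        _ ≤ (2 * Real.exp ((ω' + C) * h)) ^ n * (2 * Real.exp ((ω' + C) * h) * ν x) :=
            mul_le_mul_of_nonneg_left (hν_A h hh x)
              (pow_nonneg (by positivity) n)
        _ = (2 * Real.exp ((ω' + C) * h)) ^ (n + 1) * ν x := by ring
  -- conclusion
  refine ⟨M', ω' + C, hM', ?_⟩
  intro t ht n hn
  have hn0 : (n : ℝ) ≠ 0 := Nat.cast_ne_zero.mpr (by omega)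
  have hh : 0 ≤ t / n := div_nonneg ht (Nat.cast_nonneg n)
  set h : ℝ := t / n with hhdef
  set A := NormedSpace.exp (h • 𝒞) * 𝒯 h + 𝒯 h * NormedSpace.exp (h • 𝒞) with hA
  refine ContinuousLinearMap.opNorm_le_bound _ (by positivity) fun x => ?_
  have happ : ((1 / 2 ^ n : ℝ) • A ^ n) x = (1 / 2 ^ n : ℝ) • ((A ^ n) x) := rfl
  rw [happ, norm_smul, Real.norm_eq_abs, abs_of_pos (by positivity)]
  have hkey : ‖(A ^ n) x‖ ≤ (2 * Real.exp ((ω' + C) * h)) ^ n * (M' * ‖x‖) :=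
    le_trans (hle_ν _) (le_trans (hν_An h hh n x)
      (mul_le_mul_of_nonneg_left (hν_leM x) (pow_nonneg (by positivity) n)))
  have hexp_pow : Real.exp ((ω' + C) * h) ^ n = Real.exp ((ω' + C) * t) := by
    rw [← Real.exp_nat_mul]
    congr 1
    field_simp [hhdef]
    rw [hhdef]; field_simp
  calc (1 / 2 ^ n : ℝ) * ‖(A ^ n) x‖
      ≤ (1 / 2 ^ n : ℝ) * ((2 * Real.exp ((ω' + C) * h)) ^ n * (M' * ‖x‖)) := by
        gcongr
      _ = Real.exp ((ω' + C) * h) ^ n * (M' * ‖x‖) := by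
        rw [mul_pow]
        field_simp
        try ring
      _ = M' * Real.exp ((ω' + C) * t) * ‖x‖ := by rw [hexp_pow]; ring
end

section
/- Let E and F be Banach spaces, let T : [0,∞) → L(E), R : [0,∞) → L(F,E), S : [0,∞) → L(F) be families of bounded operators such that 𝒯(t) := M(T(t),R(t),S(t)) is a semigroup on E × F, and assume there exist M' ≥ 1 and ω' ∈ ℝ with ‖T(t)‖ ≤ M'·e^{ω't} and ‖S(t)‖ ≤ M'·e^{ω't} for all t ≥ 0. Then the following are equivalent: (a) there exists K > 0 such that ‖R(t)‖ ≤ K·t for all t ∈ [0,1]; (a') there exist K > 0 and ω ∈ ℝ such that ‖R(t)‖ ≤ K·t·e^{ωt} for all t ≥ 0. -/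
open ContinuousLinearMap

/-- for a triangular matrix semigroup with exponentially bounded diagonal,
the off-diagonal entry satisfies `‖R(t)‖ ≤ Kt` on `[0,1]` iff it satisfies a global
estimate `‖R(t)‖ ≤ Kt·e^{ωt}`. -/
theorem offdiagonal_linear_bound_iff {E F : Type*}
    [NormedAddCommGroup E] [NormedSpace ℝ E] [CompleteSpace E]
    [NormedAddCommGroup F] [NormedSpace ℝ F] [CompleteSpace F]
    (T : ℝ → E →L[ℝ] E) (R : ℝ → F →L[ℝ] E) (S : ℝ → F →L[ℝ] F)
    (hsg : IsOPSemigroup (fun t => upperTri (T t) (R t) (S t)))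
    (M' ω' : ℝ) (hM' : 1 ≤ M')
    (hT : ∀ t : ℝ, 0 ≤ t → ‖T t‖ ≤ M' * Real.exp (ω' * t))
    (hS : ∀ t : ℝ, 0 ≤ t → ‖S t‖ ≤ M' * Real.exp (ω' * t)) :
    (∃ K : ℝ, 0 < K ∧ ∀ t ∈ Set.Icc (0 : ℝ) 1, ‖R t‖ ≤ K * t) ↔
    (∃ K ω : ℝ, 0 < K ∧ ∀ t : ℝ, 0 ≤ t → ‖R t‖ ≤ K * t * Real.exp (ω * t)) := by
  constructor
  · rintro ⟨K, hK, hbd⟩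
    -- cocycle identity for R
    have key : ∀ s t : ℝ, 0 ≤ s → 0 ≤ t → ∀ y : F,
        R (t + s) y = T t (R s y) + R t (S s y) := by
      intro s t hs ht y
      have h := hsg.2 s t hs ht
      have h2 := congrArg (fun (M : (E × F) →L[ℝ] (E × F)) => (M ((0 : E), y)).1) h
      simpa [upperTri, ContinuousLinearMap.prod_apply, ContinuousLinearMap.mul_apply,
        ContinuousLinearMap.add_apply, ContinuousLinearMap.comp_apply] using h2
    have hRn : ∀ s t : ℝ, 0 ≤ s → 0 ≤ t →
        ‖R (t + s)‖ ≤ ‖T t‖ * ‖R s‖ + ‖R t‖ * ‖S s‖ := by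
      intro s t hs ht
      apply ContinuousLinearMap.opNorm_le_bound _ (by positivity)
      intro y
      rw [key s t hs ht y]
      calc ‖T t (R s y) + R t (S s y)‖ ≤ ‖T t (R s y)‖ + ‖R t (S s y)‖ := norm_add_le _ _
        _ ≤ ‖T t‖ * (‖R s‖ * ‖y‖) + ‖R t‖ * (‖S s‖ * ‖y‖) := by
            gcongr
            · exact le_trans ((T t).le_opNorm _) (by gcongr; exact (R s).le_opNorm y)
            · exact le_trans ((R t).le_opNorm _) (by gcongr; exact (S s).le_opNorm y)
        _ = (‖T t‖ * ‖R s‖ + ‖R t‖ * ‖S s‖) * ‖y‖ := by ring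
    set ω₀ := max ω' 0 with hω₀
    have hω₀0 : 0 ≤ ω₀ := le_max_right _ _
    have hexp1 : 1 ≤ Real.exp ω₀ := Real.one_le_exp hω₀0
    set a := M' * Real.exp ω₀ with ha
    have ha1 : 1 ≤ a := by nlinarith
    have ha0 : 0 ≤ a := by linarith
    have hT1 : ‖T 1‖ ≤ a := by
      refine (hT 1 zero_le_one).trans ?_
      have : ω' * 1 ≤ ω₀ := by simp [hω₀]
      have := Real.exp_le_exp.mpr this
      nlinarith
    have hR1 : ‖R 1‖ ≤ K := by simpa using hbd 1 ⟨zero_le_one, le_refl 1⟩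
    have hSn : ∀ s : ℝ, 0 ≤ s → ‖S s‖ ≤ M' * Real.exp (ω₀ * s) := by
      intro s hs
      refine (hS s hs).trans ?_
      have : ω' * s ≤ ω₀ * s := by
        apply mul_le_mul_of_nonneg_right (le_max_left _ _) hs
      have := Real.exp_le_exp.mpr this
      nlinarith
    have claim : ∀ n : ℕ, ∀ t : ℝ, (n : ℝ) ≤ t → t ≤ (n : ℝ) + 1 →
        ‖R t‖ ≤ K * a ^ n * ((n : ℝ) + 1) := by
      intro n
      induction n with
      | zero =>
        intro t h0 h1
        have h0' : (0:ℝ) ≤ t := by exact_mod_cast h0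
        have h1' : t ≤ 1 := by simpa using h1
        have := hbd t ⟨h0', h1'⟩
        simp only [pow_zero, Nat.cast_zero, zero_add, mul_one]
        nlinarith
      | succ n ih =>
        intro t hn1 hn2
        have hcast : ((n : ℕ) + 1 : ℝ) ≤ t := by push_cast at hn1 ⊢; linarith
        have hnn : (0:ℝ) ≤ (n:ℝ) := Nat.cast_nonneg n
        have hs0 : (0:ℝ) ≤ t - 1 := by push_cast at hn1; linarith
        have hb := hRn (t - 1) 1 hs0 zero_le_one
        have ht' : 1 + (t - 1) = t := by ring
        rw [ht'] at hb
        have hRs : ‖R (t - 1)‖ ≤ K * a ^ n * ((n : ℝ) + 1) :=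
          ih (t - 1) (by push_cast at hn1 ⊢; linarith) (by push_cast at hn2 ⊢; linarith)
        have hSs : ‖S (t - 1)‖ ≤ M' * Real.exp (ω₀ * (t - 1)) := hSn _ hs0
        have hMSb : M' * Real.exp (ω₀ * (t - 1)) ≤ a ^ (n + 1) := by
          have h1 : M' ≤ M' ^ (n + 1) := le_self_pow₀ (by linarith) (Nat.succ_ne_zero n)
          have h2 : Real.exp (ω₀ * (t - 1)) ≤ (Real.exp ω₀) ^ (n + 1) := by
            rw [← Real.exp_nat_mul]
            apply Real.exp_le_exp.mpr
            have : t - 1 ≤ (n : ℝ) + 1 := by push_cast at hn2; linarith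
            calc ω₀ * (t - 1) ≤ ω₀ * ((n:ℝ) + 1) := by
                  exact mul_le_mul_of_nonneg_left this hω₀0
              _ = ((n : ℕ) + 1 : ℕ) * ω₀ := by push_cast; ring
          calc M' * Real.exp (ω₀ * (t - 1))
              ≤ M' ^ (n + 1) * (Real.exp ω₀) ^ (n + 1) := by
                apply mul_le_mul h1 h2 (Real.exp_pos _).le (by positivity)
            _ = a ^ (n + 1) := by rw [ha, mul_pow]
        have hRsnn : (0:ℝ) ≤ ‖R (t - 1)‖ := norm_nonneg _
        have step : ‖R t‖ ≤ a * (K * a ^ n * ((n : ℝ) + 1)) + K * a ^ (n + 1) :=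
          hb.trans (add_le_add
            (mul_le_mul hT1 hRs (norm_nonneg _) ha0)
            (mul_le_mul hR1 (hSs.trans hMSb) (norm_nonneg _) hK.le))
        refine step.trans (le_of_eq ?_)
        push_cast
        ring
    refine ⟨2 * K, Real.log a, by linarith, ?_⟩
    intro t ht
    have hla : 0 ≤ Real.log a := Real.log_nonneg ha1
    by_cases h1 : t ≤ 1
    · have hb := hbd t ⟨ht, h1⟩
      have hexp : 1 ≤ Real.exp (Real.log a * t) := Real.one_le_exp (by positivity)
      nlinarith [mul_nonneg hK.le ht]
    · push_neg at h1
      set n := ⌊t⌋₊ with hn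
      have hn1 : (n : ℝ) ≤ t := Nat.floor_le ht
      have hn2 : t ≤ (n : ℝ) + 1 := (Nat.lt_floor_add_one t).le
      have hnge : 1 ≤ n := Nat.le_floor (by exact_mod_cast h1.le)
      have hc := claim n t hn1 hn2
      have han : a ^ n ≤ Real.exp (Real.log a * t) := by
        have hap : (0:ℝ) < a := by linarith
        have : (a : ℝ) ^ n = Real.exp ((n : ℝ) * Real.log a) := by
          rw [Real.exp_nat_mul, Real.exp_log hap]
        rw [this]
        apply Real.exp_le_exp.mpr
        calc (n : ℝ) * Real.log a ≤ t * Real.log a :=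
              mul_le_mul_of_nonneg_right hn1 hla
          _ = Real.log a * t := mul_comm _ _
      have h2n : (n : ℝ) + 1 ≤ 2 * t := by
        have : (1:ℝ) ≤ (n:ℝ) := by exact_mod_cast hnge
        linarith
      calc ‖R t‖ ≤ K * a ^ n * ((n : ℝ) + 1) := hc
        _ ≤ K * Real.exp (Real.log a * t) * (2 * t) := by
            gcongr
        _ = 2 * K * t * Real.exp (Real.log a * t) := by ring
  · rintro ⟨K, ω, hK, h⟩
    refine ⟨K * Real.exp |ω|, by positivity, ?_⟩
    rintro t ⟨ht0, ht1⟩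
    have habs : ω * t ≤ |ω| := by
      refine (le_abs_self _).trans ?_
      rw [abs_mul, abs_of_nonneg ht0]
      nlinarith [abs_nonneg ω]
    calc ‖R t‖ ≤ K * t * Real.exp (ω * t) := h t ht0
      _ ≤ K * t * Real.exp |ω| := by
          apply mul_le_mul_of_nonneg_left (Real.exp_le_exp.mpr habs) (by positivity)
      _ = K * Real.exp |ω| * t := by ring
end

section
/- Let 𝒳 be a Banach space and let (𝒯₁(t))_{t≥0} and (𝒯₂(t))_{t≥0} be semigroups on 𝒳 satisfying ‖𝒯₁(t)‖ ≤ M'·e^{ω't} and ‖𝒯₂(t)‖ ≤ M'·e^{ω't} for all t ≥ 0 with some constants M' ≥ 1, ω' ∈ ℝ. Then the sequential (Trotter) products are stable if and only if the Strang products are stable; that is, (1) there exist M ≥ 1 and ω ∈ ℝ with ‖(𝒯₂(t/n)𝒯₁(t/n))^n‖ ≤ M·e^{ωt} for all t ≥ 0 and integers n ≥ 1, if and only if (2) there exist M ≥ 1 and ω ∈ ℝ with ‖(𝒯₁(t/(2n))𝒯₂(t/n)𝒯₁(t/(2n)))^n‖ ≤ M·e^{ωt} for all t ≥ 0 and integers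 n ≥ 1. -/
private lemma pow_aux1 {M : Type*} [Monoid M] (a b : M) (k : ℕ) :
    (a * b * a) ^ (k + 1) = a * (b * (a * a)) ^ k * (b * a) := by
  induction k with
  | zero => simp [mul_assoc]
  | succ k ih =>
    rw [pow_succ', ih, pow_succ']
    simp [mul_assoc]

private lemma pow_aux2 {M : Type*} [Monoid M] (a b : M) (k : ℕ) :
    (b * (a * a)) ^ (k + 1) = (b * a) * (a * b * a) ^ k * a := by
  induction k with
  | zero => simp [mul_assoc]
  | succ k ih =>
    rw [pow_succ', ih, pow_succ']
    simp [mul_assoc]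

private lemma pow_stable_bound {𝒳 : Type*}
    [NormedAddCommGroup 𝒳] [NormedSpace ℝ 𝒳]
    (P : ℝ → 𝒳 →L[ℝ] 𝒳) (M ω : ℝ) (hM : 1 ≤ M)
    (h : ∀ s : ℝ, 0 ≤ s → ∀ m : ℕ, 1 ≤ m → ‖(P (s / m)) ^ m‖ ≤ M * Real.exp (ω * s))
    (t : ℝ) (ht : 0 ≤ t) (k : ℕ) :
    ‖(P (t / ((k + 1 : ℕ) : ℝ))) ^ k‖ ≤ M * Real.exp (|ω| * t) := by
  have hE : 1 ≤ Real.exp (|ω| * t) := Real.one_le_exp (by positivity)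
  rcases Nat.eq_zero_or_pos k with rfl | hk
  · rw [pow_zero]
    have h1 : ‖(1 : 𝒳 →L[ℝ] 𝒳)‖ ≤ 1 := by
      rw [ContinuousLinearMap.one_def]; exact ContinuousLinearMap.norm_id_le
    nlinarith
  · have hk0 : ((k : ℝ)) ≠ 0 := Nat.cast_ne_zero.mpr hk.ne'
    have hkc : (0 : ℝ) < ((k + 1 : ℕ) : ℝ) := by positivity
    set s : ℝ := (k : ℝ) * (t / ((k + 1 : ℕ) : ℝ)) with hs
    have hs0 : 0 ≤ s := by positivity
    have hdiv : s / (k : ℝ) = t / ((k + 1 : ℕ) : ℝ) := by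
      rw [hs, mul_comm, mul_div_assoc, div_self hk0, mul_one]
    have hst : s ≤ t := by
      rw [hs]
      calc (k : ℝ) * (t / ((k + 1 : ℕ) : ℝ))
          ≤ ((k + 1 : ℕ) : ℝ) * (t / ((k + 1 : ℕ) : ℝ)) := by
            gcongr
            push_cast; linarith
        _ = t := by field_simp
    have hmain := h s hs0 k hk
    rw [hdiv] at hmain
    refine hmain.trans ?_
    have hexp : ω * s ≤ |ω| * t :=
      calc ω * s ≤ |ω| * s := mul_le_mul_of_nonneg_right (le_abs_self _) hs0
        _ ≤ |ω| * t := mul_le_mul_of_nonneg_left hst (abs_nonneg _)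
    exact mul_le_mul_of_nonneg_left (Real.exp_le_exp.mpr hexp) (by linarith)

/-- for two exponentially bounded semigroups, the Trotter (sequential)
products are stable iff the Strang products are stable. -/
theorem trotter_stable_iff_strang_stable {𝒳 : Type*}
    [NormedAddCommGroup 𝒳] [NormedSpace ℝ 𝒳] [CompleteSpace 𝒳]
    (𝒯₁ 𝒯₂ : ℝ → 𝒳 →L[ℝ] 𝒳)
    (hsg₁ : IsOPSemigroup 𝒯₁) (hsg₂ : IsOPSemigroup 𝒯₂)
    (M' ω' : ℝ) (hM' : 1 ≤ M')
    (hb₁ : ∀ t : ℝ, 0 ≤ t → ‖𝒯₁ t‖ ≤ M' * Real.exp (ω' * t))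
    (hb₂ : ∀ t : ℝ, 0 ≤ t → ‖𝒯₂ t‖ ≤ M' * Real.exp (ω' * t)) :
    (∃ M ω : ℝ, 1 ≤ M ∧ ∀ t : ℝ, 0 ≤ t → ∀ n : ℕ, 1 ≤ n →
      ‖(𝒯₂ (t / n) * 𝒯₁ (t / n)) ^ n‖ ≤ M * Real.exp (ω * t)) ↔
    (∃ M ω : ℝ, 1 ≤ M ∧ ∀ t : ℝ, 0 ≤ t → ∀ n : ℕ, 1 ≤ n →
      ‖(𝒯₁ (t / (2 * n)) * 𝒯₂ (t / n) * 𝒯₁ (t / (2 * n))) ^ n‖ ≤ M * Real.exp (ω * t)) := by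
  have hbd : ∀ (𝒯 : ℝ → 𝒳 →L[ℝ] 𝒳), (∀ s : ℝ, 0 ≤ s → ‖𝒯 s‖ ≤ M' * Real.exp (ω' * s)) →
      ∀ t x : ℝ, 0 ≤ t → 0 ≤ x → x ≤ t → ‖𝒯 x‖ ≤ M' * Real.exp (|ω'| * t) := by
    intro 𝒯 hb t x ht hx hxt
    refine (hb x hx).trans ?_
    have hexp : ω' * x ≤ |ω'| * t :=
      calc ω' * x ≤ |ω'| * x := mul_le_mul_of_nonneg_right (le_abs_self _) hx
        _ ≤ |ω'| * t := mul_le_mul_of_nonneg_left hxt (abs_nonneg _)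
    exact mul_le_mul_of_nonneg_left (Real.exp_le_exp.mpr hexp) (by linarith)
  have hM3 : (1 : ℝ) ≤ M' ^ 3 := one_le_pow₀ hM'
  constructor
  · rintro ⟨M, ω, hM, hst⟩
    refine ⟨M' ^ 3 * M, |ω| + 3 * |ω'|, by nlinarith, ?_⟩
    intro t ht n hn
    obtain ⟨k, rfl⟩ : ∃ k, n = k + 1 := ⟨n - 1, (Nat.succ_pred_eq_of_pos hn).symm⟩
    have hN1 : (1 : ℝ) ≤ ((k + 1 : ℕ) : ℝ) := by push_cast; linarith [Nat.cast_nonneg (α := ℝ) k]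
    have hN : (0 : ℝ) < ((k + 1 : ℕ) : ℝ) := by linarith
    set N : ℝ := ((k + 1 : ℕ) : ℝ) with hNdef
    have hthalf : 0 ≤ t / (2 * N) := by positivity
    have htN : 0 ≤ t / N := by positivity
    have htNle : t / N ≤ t := div_le_self ht hN1
    have hthalfle : t / (2 * N) ≤ t := div_le_self ht (by linarith)
    have haa : 𝒯₁ (t / (2 * N)) * 𝒯₁ (t / (2 * N)) = 𝒯₁ (t / N) := by
      rw [← hsg₁.2 _ _ hthalf hthalf]
      congr 1
      field_simp
      ring
    rw [pow_aux1, haa]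
    have hQ : ‖(𝒯₂ (t / N) * 𝒯₁ (t / N)) ^ k‖ ≤ M * Real.exp (|ω| * t) :=
      pow_stable_bound (fun x => 𝒯₂ x * 𝒯₁ x) M ω hM
        (fun s hs m hm => hst s hs m hm) t ht k
    have hA : ‖𝒯₁ (t / (2 * N))‖ ≤ M' * Real.exp (|ω'| * t) :=
      hbd 𝒯₁ hb₁ t _ ht hthalf hthalfle
    have hB : ‖𝒯₂ (t / N)‖ ≤ M' * Real.exp (|ω'| * t) :=
      hbd 𝒯₂ hb₂ t _ ht htN htNle
    calc ‖𝒯₁ (t / (2 * N)) * (𝒯₂ (t / N) * 𝒯₁ (t / N)) ^ k * (𝒯₂ (t / N) * 𝒯₁ (t / (2 * N)))‖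
        ≤ ‖𝒯₁ (t / (2 * N)) * (𝒯₂ (t / N) * 𝒯₁ (t / N)) ^ k‖ * ‖𝒯₂ (t / N) * 𝒯₁ (t / (2 * N))‖ :=
          norm_mul_le _ _
      _ ≤ (‖𝒯₁ (t / (2 * N))‖ * ‖(𝒯₂ (t / N) * 𝒯₁ (t / N)) ^ k‖) *
            (‖𝒯₂ (t / N)‖ * ‖𝒯₁ (t / (2 * N))‖) :=
          mul_le_mul (norm_mul_le _ _) (norm_mul_le _ _) (norm_nonneg _) (by positivity)
      _ ≤ ((M' * Real.exp (|ω'| * t)) * (M * Real.exp (|ω| * t))) *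
            ((M' * Real.exp (|ω'| * t)) * (M' * Real.exp (|ω'| * t))) := by
          gcongr
      _ = M' ^ 3 * M * Real.exp ((|ω| + 3 * |ω'|) * t) := by
          rw [show (|ω| + 3 * |ω'|) * t = |ω| * t + (|ω'| * t + (|ω'| * t + |ω'| * t)) by ring,
            Real.exp_add, Real.exp_add, Real.exp_add]
          ring
  · rintro ⟨M, ω, hM, hst⟩
    refine ⟨M' ^ 3 * M, |ω| + 3 * |ω'|, by nlinarith, ?_⟩
    intro t ht n hn
    obtain ⟨k, rfl⟩ : ∃ k, n = k + 1 := ⟨n - 1, (Nat.succ_pred_eq_of_pos hn).symm⟩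
    have hN1 : (1 : ℝ) ≤ ((k + 1 : ℕ) : ℝ) := by push_cast; linarith [Nat.cast_nonneg (α := ℝ) k]
    have hN : (0 : ℝ) < ((k + 1 : ℕ) : ℝ) := by linarith
    set N : ℝ := ((k + 1 : ℕ) : ℝ) with hNdef
    have hthalf : 0 ≤ t / (2 * N) := by positivity
    have htN : 0 ≤ t / N := by positivity
    have htNle : t / N ≤ t := div_le_self ht hN1
    have hthalfle : t / (2 * N) ≤ t := div_le_self ht (by linarith)
    have haa : 𝒯₁ (t / (2 * N)) * 𝒯₁ (t / (2 * N)) = 𝒯₁ (t / N) := by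
      rw [← hsg₁.2 _ _ hthalf hthalf]
      congr 1
      field_simp
      ring
    rw [← haa, pow_aux2]
    have hQ : ‖(𝒯₁ (t / (2 * N)) * 𝒯₂ (t / N) * 𝒯₁ (t / (2 * N))) ^ k‖
        ≤ M * Real.exp (|ω| * t) := by
      have := pow_stable_bound (fun x => 𝒯₁ (x / 2) * 𝒯₂ x * 𝒯₁ (x / 2)) M ω hM
        (fun s hs m hm => by
          have e : s / (m : ℝ) / 2 = s / (2 * (m : ℝ)) := by rw [div_div, mul_comm]
          simpa only [e] using hst s hs m hm) t ht k
      have e2 : t / N / 2 = t / (2 * N) := by rw [div_div, mul_comm]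
      simpa only [e2, ← hNdef] using this
    have hA : ‖𝒯₁ (t / (2 * N))‖ ≤ M' * Real.exp (|ω'| * t) :=
      hbd 𝒯₁ hb₁ t _ ht hthalf hthalfle
    have hB : ‖𝒯₂ (t / N)‖ ≤ M' * Real.exp (|ω'| * t) :=
      hbd 𝒯₂ hb₂ t _ ht htN htNle
    calc ‖𝒯₂ (t / N) * 𝒯₁ (t / (2 * N)) *
            (𝒯₁ (t / (2 * N)) * 𝒯₂ (t / N) * 𝒯₁ (t / (2 * N))) ^ k * 𝒯₁ (t / (2 * N))‖
        ≤ ‖𝒯₂ (t / N) * 𝒯₁ (t / (2 * N)) *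
            (𝒯₁ (t / (2 * N)) * 𝒯₂ (t / N) * 𝒯₁ (t / (2 * N))) ^ k‖ * ‖𝒯₁ (t / (2 * N))‖ :=
          norm_mul_le _ _
      _ ≤ (‖𝒯₂ (t / N) * 𝒯₁ (t / (2 * N))‖ *
            ‖(𝒯₁ (t / (2 * N)) * 𝒯₂ (t / N) * 𝒯₁ (t / (2 * N))) ^ k‖) * ‖𝒯₁ (t / (2 * N))‖ :=
          mul_le_mul_of_nonneg_right (norm_mul_le _ _) (norm_nonneg _)
      _ ≤ ((‖𝒯₂ (t / N)‖ * ‖𝒯₁ (t / (2 * N))‖) *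
            ‖(𝒯₁ (t / (2 * N)) * 𝒯₂ (t / N) * 𝒯₁ (t / (2 * N))) ^ k‖) * ‖𝒯₁ (t / (2 * N))‖ := by
          gcongr
          exact norm_mul_le _ _
      _ ≤ (((M' * Real.exp (|ω'| * t)) * (M' * Real.exp (|ω'| * t))) *
            (M * Real.exp (|ω| * t))) * (M' * Real.exp (|ω'| * t)) := by
          gcongr
      _ = M' ^ 3 * M * Real.exp ((|ω| + 3 * |ω'|) * t) := by
          rw [show (|ω| + 3 * |ω'|) * t = |ω| * t + (|ω'| * t + (|ω'| * t + |ω'| * t)) by ring,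
            Real.exp_add, Real.exp_add, Real.exp_add]
          ring
end
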